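/- Let M be a finitely generated ℤ-graded R-module with minimal free resolution F, and let a ∈ F_i be a nonzero homogeneous element. Then ||a|| = |a|_F + |a|_m. -/

import Mathlib

/-! Write a homogeneous `a ∈ F_i` of degree `t` as `∑ a_c e_c` over the basis; each `a_c` is
homogeneous of degree `t - deg e_c`, and let `D` be the largest `deg e_c` with `a_c ≠ 0`.
Because `J` is homogeneous, a nonzero homogeneous element of `R` lies in `m^ℓ` exactly when its
degree is at least `ℓ`; in particular elements of negative degree vanish. Hence `a ∈ F^{≤k}`
iff `D - i ≤ k`, and `a ∈ m^ℓ F` iff `ℓ ≤ t - D`, so `|a|_F + |a|_m = (D - i) + (t - D) = t - i`. -/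

set_option maxHeartbeats 1000000
set_option synthInstance.maxHeartbeats 400000

open MvPolynomial

noncomputable section

namespace LinMaps


/-- The polynomial ring `S = 𝕜[x₁,…,xₙ]`. -/
abbrev PolyS (k : Type) [Field k] (n : ℕ) := MvPolynomial (Fin n) k

/-- The irrelevant maximal ideal `m = (x₁,…,xₙ)` of `S`. -/
def mIdl (k : Type) [Field k] (n : ℕ) : Ideal (PolyS k n) := Ideal.span (Set.range X)

/-- `polyHom t p` : the polynomial `p` is homogeneous of degree `t ∈ ℤ` in the standard
`ℤ`-grading of `S`. -/
def polyHom (k : Type) [Field k] (n : ℕ) : ℤ → PolyS k n → Prop := fun t p =>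
  if 0 ≤ t then p.IsHomogeneous t.toNat else p = 0

/-- `J` is a homogeneous ideal. -/
def IdealIsHomog {k : Type} [Field k] {n : ℕ} (J : Ideal (PolyS k n)) : Prop :=
  ∀ p ∈ J, ∀ t : ℕ, MvPolynomial.homogeneousComponent t p ∈ J

/-- Homogeneity of degree `t ∈ ℤ` in `R = S/J`. -/
def quotHom (k : Type) [Field k] (n : ℕ) (J : Ideal (PolyS k n)) :
    ℤ → (PolyS k n ⧸ J) → Prop :=
  fun t r => ∃ p : PolyS k n, polyHom k n t p ∧ Ideal.Quotient.mk J p = r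

/-- The irrelevant maximal ideal of `R = S/J`. -/
def mIdlQ (k : Type) [Field k] (n : ℕ) (J : Ideal (PolyS k n)) : Ideal (PolyS k n ⧸ J) :=
  (mIdl k n).map (Ideal.Quotient.mk J)

/-- Homogeneity for the fine `ℤⁿ`-multigrading on `S`: `p` is homogeneous of
multidegree `m : Fin n → ℤ`. -/
def mHom (k : Type) [Field k] (n : ℕ) : (Fin n → ℤ) → PolyS k n → Prop := fun m p =>
  ∀ d ∈ p.support, ∀ u, (d u : ℤ) = m u

/-- A structure of graded module (with degrees in the abelian group `γ`) on an `A`-module `M`,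
relative to a notion `hom : γ → A → Prop` of homogeneous elements of the ring `A`:
a family of additive subgroups forming an internal direct sum, such that homogeneous ring
elements shift degrees. -/
structure GrModStr {A : Type} [CommRing A] {γ : Type} [AddCommGroup γ] [DecidableEq γ]
    (hom : γ → A → Prop) (M : Type) [AddCommGroup M] [Module A M] where
  gr : γ → AddSubgroup M
  internal : DirectSum.IsInternal gr
  smul_mem : ∀ {t e : γ} {r : A} {m : M}, hom t r → m ∈ gr e → r • m ∈ gr (t + e)

/-- A minimal graded free resolution `F : 0 ← M ← F₀ ← F₁ ← ⋯` of the graded `A`-module `M`.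
`β i` is a (finite) homogeneous basis of `Fᵢ = β i →₀ A`, with degrees `degB`.
The differential `d` and augmentation `aug` are homogeneous, the complex is exact,
and minimality `d(Fᵢ) ⊆ m·Fᵢ₋₁` holds (all matrix entries lie in `mA`). -/
structure MinFreeRes {A : Type} [CommRing A] (mA : Ideal A) {γ : Type} [AddCommGroup γ]
    [DecidableEq γ] (hom : γ → A → Prop) (M : Type) [AddCommGroup M] [Module A M]
    (gM : GrModStr hom M) where
  β : ℕ → Type
  finb : ∀ i, Fintype (β i)
  degB : ∀ i, β i → γ
  d : ∀ i, (β (i+1) →₀ A) →ₗ[A] (β i →₀ A)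
  aug : (β 0 →₀ A) →ₗ[A] M
  aug_surj : Function.Surjective aug
  exact0 : LinearMap.ker aug = LinearMap.range (d 0)
  exact : ∀ i, LinearMap.ker (d i) = LinearMap.range (d (i+1))
  homog : ∀ i (b : β (i+1)) (c : β i), hom (degB (i+1) b - degB i c) (d i (Finsupp.single b 1) c)
  minimal : ∀ i (b : β (i+1)) (c : β i), d i (Finsupp.single b 1) c ∈ mA
  aug_hom : ∀ (t : γ) (g : β 0 →₀ A), (∀ c, hom (t - degB 0 c) (g c)) → aug g ∈ gM.gr t

namespace MinFreeRes

variable {A : Type} [CommRing A] {mA : Ideal A} {γ : Type} [AddCommGroup γ] [DecidableEq γ]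
  {hom : γ → A → Prop} {M : Type} [AddCommGroup M] [Module A M] {gM : GrModStr hom M}
  (res : MinFreeRes mA hom M gM)

/-- The matrix entry of the differential between basis elements `b` and `c`. -/
def ent (i : ℕ) (b : res.β (i+1)) (c : res.β i) : A := res.d i (Finsupp.single b 1) c

/-- `g ∈ Fᵢ` is homogeneous of (internal) degree `t`. -/
def IsHomogF (i : ℕ) (t : γ) (g : res.β i →₀ A) : Prop := ∀ c, hom (t - res.degB i c) (g c)

open Classical in
/-- The entries of the linear part of the differential: all entries lying in `m²` are deleted. -/
def linent (i : ℕ) (b : res.β (i+1)) (c : res.β i) : A :=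
  if res.ent i b c ∈ mA ^ 2 then 0 else res.ent i b c

/-- The row of the linear part of the differential corresponding to a basis element `b`. -/
def linrow (i : ℕ) (b : res.β (i+1)) : res.β i →₀ A :=
  letI := res.finb i
  Finsupp.equivFunOnFinite.symm fun c => res.linent i b c

/-- The differential of the linear part `F^lin` of the resolution. -/
def dlin (i : ℕ) : (res.β (i+1) →₀ A) →ₗ[A] (res.β i →₀ A) :=
  Finsupp.linearCombination A (fun b => res.linrow i b)

/-- The submodule `mᵉ · Fᵢ`. -/
def mF (ℓ i : ℕ) : Submodule A (res.β i →₀ A) := (mA ^ ℓ) • (⊤ : Submodule A (res.β i →₀ A))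

/-- Nonvanishing of the `i`-th homology of the linear part `F^lin`. -/
def HlinNZ : ℕ → Prop
  | 0 => LinearMap.range (res.dlin 0) ≠ ⊤
  | i+1 => ¬ LinearMap.ker (res.dlin i) ≤ LinearMap.range (res.dlin (i+1))

/-- The complex `F ⊗ A/mᵉ`, concretely `Fᵢ/mᵉFᵢ`. -/
abbrev Cq (ℓ i : ℕ) := (res.β i →₀ A) ⧸ res.mF ℓ i

/-- The differential of `F ⊗ A/mᵉ`. -/
def dq (ℓ i : ℕ) : res.Cq ℓ (i+1) →ₗ[A] res.Cq ℓ i :=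
  Submodule.mapQ _ _ (res.d i) (by
    rw [← Submodule.map_le_iff_le_comap]
    calc Submodule.map (res.d i) (res.mF ℓ (i+1))
        = (mA ^ ℓ) • Submodule.map (res.d i) ⊤ := Submodule.map_smul'' _ _ _
      _ ≤ res.mF ℓ i := smul_mono_right _ le_top)

/-- The comparison map `F ⊗ A/m² → F ⊗ A/m` induced by the projection `A/m² → A/m`. -/
def qq (i : ℕ) : res.Cq 2 i →ₗ[A] res.Cq 1 i :=
  Submodule.mapQ _ _ LinearMap.id (by
    rw [← Submodule.map_le_iff_le_comap, Submodule.map_id]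
    exact Submodule.smul_mono_left (Ideal.pow_le_pow_right one_le_two))

lemma qq_dq (i : ℕ) : (res.qq i).comp (res.dq 2 i) = (res.dq 1 i).comp (res.qq (i+1)) := by
  apply Submodule.linearMap_qext
  apply LinearMap.ext
  intro x
  simp [dq, qq, Submodule.mapQ_apply]

/-- Tor₀ of `M` with `A/mᵉ`, computed from the resolution. -/
abbrev Tor0 (ℓ : ℕ) := (res.Cq ℓ 0) ⧸ LinearMap.range (res.dq ℓ 0)

/-- Cycles of `F ⊗ A/mᵉ` in homological degree `l+1`. -/
abbrev Zc (ℓ l : ℕ) : Submodule A (res.Cq ℓ (l+1)) := LinearMap.ker (res.dq ℓ l)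

/-- Boundaries, as a submodule of the cycles. -/
abbrev Bc (ℓ l : ℕ) : Submodule A ↥(res.Zc ℓ l) :=
  Submodule.comap (res.Zc ℓ l).subtype (LinearMap.range (res.dq ℓ (l+1)))

/-- `Tor_{l+1}(M, A/mᵉ)` computed from the resolution. -/
abbrev TorS (ℓ l : ℕ) := ↥(res.Zc ℓ l) ⧸ res.Bc ℓ l

/-- `qq` restricted to cycles. -/
def qqZ (l : ℕ) : ↥(res.Zc 2 l) →ₗ[A] ↥(res.Zc 1 l) :=
  (res.qq (l+1)).restrict (p := res.Zc 2 l) (q := res.Zc 1 l) (by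
    intro x hx
    have h := LinearMap.ext_iff.mp (res.qq_dq l) x
    simp only [LinearMap.comp_apply] at h
    simp only [Zc, LinearMap.mem_ker] at hx ⊢
    rw [← h, hx, map_zero])

/-- The map `ν^1_{l+1}(M) : Tor_{l+1}(M, A/m²) → Tor_{l+1}(M, A/m)`. -/
def nuS (l : ℕ) : res.TorS 2 l →ₗ[A] res.TorS 1 l :=
  Submodule.mapQ _ _ (res.qqZ l) (by
    rintro ⟨x, hx⟩ hb
    simp only [Bc, Submodule.mem_comap, Submodule.subtype_apply, LinearMap.mem_range] at hb ⊢
    obtain ⟨y, hy⟩ := hb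
    refine ⟨res.qq (l+2) y, ?_⟩
    have h := LinearMap.ext_iff.mp (res.qq_dq (l+1)) y
    simp only [LinearMap.comp_apply] at h
    show res.dq 1 (l+1) (res.qq (l+2) y) = (res.qqZ l ⟨x, hx⟩ : res.Cq 1 (l+1))
    rw [← h, hy]
    rfl)

/-- The map `ν^1_0(M) : Tor₀(M, A/m²) → Tor₀(M, A/m)`. -/
def nu0 : res.Tor0 2 →ₗ[A] res.Tor0 1 :=
  Submodule.mapQ _ _ (res.qq 0) (by
    rintro x hx
    simp only [LinearMap.mem_range, Submodule.mem_comap] at hx ⊢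
    obtain ⟨y, hy⟩ := hx
    refine ⟨res.qq 1 y, ?_⟩
    have h := LinearMap.ext_iff.mp (res.qq_dq 0) y
    simp only [LinearMap.comp_apply] at h
    rw [← h, hy])

/-- Nonvanishing of `ν_i^1(M)`. -/
def nuNZ : ℕ → Prop
  | 0 => res.nu0 ≠ 0
  | l+1 => res.nuS l ≠ 0

end MinFreeRes

section ZGraded

variable {A : Type} [CommRing A] {mA : Ideal A}
  {hom : ℤ → A → Prop} {M : Type} [AddCommGroup M] [Module A M] {gM : GrModStr hom M}
  (res : MinFreeRes mA hom M gM)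

namespace MinFreeRes

/-- The strand filtration `F^{≤k}`: the subcomplex of `F` generated by all homogeneous
elements `a` with `‖a‖ = deg a - i ≤ k`. -/
def Fle (kk : ℤ) (i : ℕ) : Submodule A (res.β i →₀ A) :=
  Submodule.span A {g | ∃ t : ℤ, res.IsHomogF i t g ∧ t - i ≤ kk}

/-- `|a|_F = min {k : a ∈ F^{≤k}}`. -/
def degF {i : ℕ} (a : res.β i →₀ A) : ℤ := sInf {kk : ℤ | a ∈ res.Fle kk i}

/-- `|a|_m = max {ℓ : a ∈ mᵉF}`. -/
def degm {i : ℕ} (a : res.β i →₀ A) : ℕ := sSup {ℓ : ℕ | a ∈ res.mF ℓ i}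

/-- The `k`-linear strand of `F^lin`: the subcomplex spanned by the basis elements `b`
with `‖b‖ = deg b - i = k`. -/
def strand (kk : ℤ) (i : ℕ) : Submodule A (res.β i →₀ A) :=
  Submodule.span A {g | ∃ b : res.β i, res.degB i b - i = kk ∧ g = Finsupp.single b 1}

/-- Vanishing of the homology of the subcomplex `F^{≤k}` in homological degree `j`. -/
def HleZero (kk : ℤ) : ℕ → Prop
  | 0 => res.Fle kk 0 ≤ Submodule.map (res.d 0) (res.Fle kk 1)
  | j+1 => LinearMap.ker (res.d j) ⊓ res.Fle kk (j+1) ≤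
      Submodule.map (res.d (j+1)) (res.Fle kk (j+2))

end MinFreeRes

/-- The submodule `M_{⟨k⟩}` of `M` generated by the homogeneous elements of degree `k`. -/
def degPartMod (gM : GrModStr hom M) (k₀ : ℤ) : Submodule A M :=
  Submodule.span A (gM.gr k₀ : Set M)

/-- A graded module `(N, gN)` has a `k₀`-linear (minimal free) resolution. -/
def HasLinRes (N : Type) [AddCommGroup N] [Module A N] (gN : GrModStr hom N) (k₀ : ℤ) : Prop :=
  ∃ res : MinFreeRes mA hom N gN, ∀ i (b : res.β i), res.degB i b = k₀ + i

/-- `M` is componentwise linear: for every `k₀`, the submodule `M_{⟨k₀⟩}` (with its induced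
grading) has a `k₀`-linear resolution. -/
def CompLinear (mA : Ideal A) (gM : GrModStr hom M) : Prop :=
  ∀ k₀ : ℤ, ∃ gN : GrModStr hom ↥(degPartMod gM k₀),
    (∀ (t : ℤ) (x : ↥(degPartMod gM k₀)), x ∈ gN.gr t ↔ (x : M) ∈ gM.gr t) ∧
    HasLinRes (mA := mA) ↥(degPartMod gM k₀) gN k₀

end ZGraded

section Polynomial

variable {k : Type} [Field k] {n : ℕ}

lemma mem_mIdl_pow_iff_of_isHomogeneous {p : PolyS k n} {s : ℕ} (hp : p.IsHomogeneous s)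
    (ℓ : ℕ) : p ∈ mIdl k n ^ ℓ ↔ p = 0 ∨ ℓ ≤ s := by
  have hdeg : ∀ x ∈ p.support, x.degree = s := fun x hx => by
    rw [Finsupp.degree_eq_weight_one]
    exact hp (mem_support_iff.mp hx)
  rw [mIdl, mem_pow_idealOfVars_iff]
  constructor
  · intro h
    rcases p.support.eq_empty_or_nonempty with h0 | ⟨x, hx⟩
    · exact Or.inl (support_eq_empty.mp h0)
    · exact Or.inr (hdeg x hx ▸ h x hx)
  · rintro (rfl | h) x hx
    · simp at hx
    · exact hdeg x hx ▸ h

lemma homogeneousComponent_eq_zero_of_mem_mIdl_pow {q : PolyS k n} {ℓ s : ℕ}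
    (hq : q ∈ mIdl k n ^ ℓ) (hs : s < ℓ) : homogeneousComponent s q = 0 :=
  homogeneousComponent_eq_zero' _ _ fun x hx =>
    ((mem_pow_idealOfVars_iff ℓ q).mp hq x hx).trans_lt' hs |>.ne'

lemma quotHom_zero (J : Ideal (PolyS k n)) (t : ℤ) : quotHom k n J t 0 :=
  ⟨0, by unfold polyHom; split_ifs <;> simp [isHomogeneous_zero], map_zero _⟩

lemma quotHom_one (J : Ideal (PolyS k n)) : quotHom k n J 0 1 :=
  ⟨1, by rw [polyHom, if_pos le_rfl]; exact isHomogeneous_one _ _, map_one _⟩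

/-- If `p ≡ q (mod J)` with `q ∈ m^ℓ`, the degree-`s` component of `p - q ∈ J` is `p`. -/
lemma mem_of_mk_mem_mIdlQ_pow {J : Ideal (PolyS k n)} (hJ : IdealIsHomog J) {p : PolyS k n}
    {s ℓ : ℕ} (hp : p.IsHomogeneous s) (hm : Ideal.Quotient.mk J p ∈ mIdlQ k n J ^ ℓ)
    (hs : s < ℓ) : p ∈ J := by
  rw [mIdlQ, ← Ideal.map_pow] at hm
  obtain ⟨q, hq, hqp⟩ := (Ideal.mem_map_iff_of_surjective _ Ideal.Quotient.mk_surjective).mp hm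
  have hpq : homogeneousComponent s (p - q) ∈ J := hJ _ (Ideal.Quotient.eq.mp hqp.symm) s
  rwa [map_sub, homogeneousComponent_eq_zero_of_mem_mIdl_pow hq hs, sub_zero,
    homogeneousComponent_of_mem ((mem_homogeneousSubmodule _ _).mpr hp), if_pos rfl] at hpq

end Polynomial

def AdicFiltrationEqDegree {A : Type} [CommRing A] (mA : Ideal A) (hom : ℤ → A → Prop) : Prop :=
  ∀ ⦃t : ℤ⦄ ⦃r : A⦄, hom t r → ∀ ℓ : ℕ, r ∈ mA ^ ℓ ↔ r = 0 ∨ (ℓ : ℤ) ≤ t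

lemma AdicFiltrationEqDegree.eq_zero_of_neg {A : Type} [CommRing A] {mA : Ideal A}
    {hom : ℤ → A → Prop} (hadic : AdicFiltrationEqDegree mA hom) {t : ℤ} {r : A} (hr : hom t r)
    (ht : t < 0) : r = 0 := by
  simpa [ht.not_ge] using (hadic hr 0).mp (by simp)

lemma adicFiltrationEqDegree_quotHom {k : Type} [Field k] {n : ℕ} {J : Ideal (PolyS k n)}
    (hJ : IdealIsHomog J) : AdicFiltrationEqDegree (mIdlQ k n J) (quotHom k n J) := by
  rintro t _ ⟨p, hp, rfl⟩ ℓ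
  unfold polyHom at hp
  split_ifs at hp with ht
  · constructor
    · refine fun hm => or_iff_not_imp_right.mpr fun hlt => ?_
      exact Ideal.Quotient.eq_zero_iff_mem.mpr (mem_of_mk_mem_mIdlQ_pow hJ hp hm (by omega))
    · rintro (h | h)
      · exact h ▸ zero_mem _
      · rw [mIdlQ, ← Ideal.map_pow]
        exact Ideal.mem_map_of_mem _
          ((mem_mIdl_pow_iff_of_isHomogeneous hp ℓ).mpr (Or.inr (by omega)))
  · simp [hp]

lemma _root_.Finsupp.mem_ideal_smul_top_iff {A β : Type} [CommRing A] (I : Ideal A) (g : β →₀ A) :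
    g ∈ I • (⊤ : Submodule A (β →₀ A)) ↔ ∀ c, g c ∈ I := by
  constructor
  · intro hg c
    refine Submodule.smul_induction_on hg (fun r hr x _ => ?_) (fun x y hx hy => ?_)
    · simpa using I.mul_mem_right (x c) hr
    · simpa using I.add_mem hx hy
  · intro h
    rw [← Finsupp.sum_single g]
    refine Submodule.sum_mem _ fun c _ => ?_
    simpa using Submodule.smul_mem_smul (h c) (Submodule.mem_top (x := Finsupp.single c (1 : A)))

namespace MinFreeRes

variable {A : Type} [CommRing A] {mA : Ideal A} {hom : ℤ → A → Prop}
  {M : Type} [AddCommGroup M] [Module A M] {gM : GrModStr hom M}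
  (res : MinFreeRes mA hom M gM)

lemma isHomogF_single (h1 : hom 0 1) (h0 : ∀ s, hom s 0) {i : ℕ} (c : res.β i) :
    res.IsHomogF i (res.degB i c) (Finsupp.single c 1) := by
  intro c'
  rcases eq_or_ne c c' with rfl | h
  · simpa using h1
  · simpa [Finsupp.single_eq_of_ne' h] using h0 _

lemma mem_Fle_iff (hadic : AdicFiltrationEqDegree mA hom) (h1 : hom 0 1) (h0 : ∀ s, hom s 0)
    {kk : ℤ} {i : ℕ} (a : res.β i →₀ A) :
    a ∈ res.Fle kk i ↔ ∀ c ∈ a.support, res.degB i c - i ≤ kk := by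
  constructor
  · intro h c hc
    by_contra! hlt
    have hvanish : ∀ g ∈ res.Fle kk i, g c = 0 := fun g hg => by
      induction hg using Submodule.span_induction with
      | mem g hg =>
        obtain ⟨t, hg, ht⟩ := hg
        exact hadic.eq_zero_of_neg (hg c) (by omega)
      | zero => rfl
      | add x y _ _ hx hy => simp [hx, hy]
      | smul r x _ hx => simp [hx]
    exact Finsupp.mem_support_iff.mp hc (hvanish a h)
  · intro h
    rw [← Finsupp.sum_single a]
    refine Submodule.sum_mem _ fun c hc => ?_
    rw [← Finsupp.smul_single_one]
    exact Submodule.smul_mem _ _ (Submodule.subset_span ⟨_, res.isHomogF_single h1 h0 c, h c hc⟩)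

lemma degF_eq (hadic : AdicFiltrationEqDegree mA hom) (h1 : hom 0 1) (h0 : ∀ s, hom s 0)
    {i : ℕ} {a : res.β i →₀ A} (ha : a ≠ 0) :
    res.degF a = a.support.sup' (Finsupp.support_nonempty_iff.mpr ha) (res.degB i) - i := by
  rw [degF]
  convert csInf_Ici
  ext kk
  simp only [Set.mem_ofPred_eq, res.mem_Fle_iff hadic h1 h0, Set.mem_Ici, sub_le_iff_le_add,
    Finset.sup'_le_iff]

lemma mem_mF_iff (hadic : AdicFiltrationEqDegree mA hom) {i : ℕ} {t : ℤ} {a : res.β i →₀ A}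
    (hta : res.IsHomogF i t a) (ℓ : ℕ) :
    a ∈ res.mF ℓ i ↔ ∀ c ∈ a.support, (ℓ : ℤ) ≤ t - res.degB i c := by
  rw [mF, Finsupp.mem_ideal_smul_top_iff]
  refine forall_congr' fun c => ?_
  rw [hadic (hta c) ℓ, Finsupp.mem_support_iff, or_iff_not_imp_left]

lemma degm_eq (hadic : AdicFiltrationEqDegree mA hom) {i : ℕ} {t : ℤ} {a : res.β i →₀ A}
    (hta : res.IsHomogF i t a) (ha : a ≠ 0) :
    (res.degm a : ℤ) = t - a.support.sup' (Finsupp.support_nonempty_iff.mpr ha) (res.degB i) := by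
  set D := a.support.sup' (Finsupp.support_nonempty_iff.mpr ha) (res.degB i)
  have hDt : D ≤ t := Finset.sup'_le _ _ fun c hc => by
    by_contra! hlt
    exact Finsupp.mem_support_iff.mp hc (hadic.eq_zero_of_neg (hta c) (by omega))
  have hset : {ℓ : ℕ | a ∈ res.mF ℓ i} = Set.Iic (t - D).toNat := by
    ext ℓ
    rw [Set.mem_ofPred_eq, res.mem_mF_iff hadic hta, Set.mem_Iic,
      Int.le_toNat (sub_nonneg.mpr hDt), le_sub_comm, Finset.sup'_le_iff]
    simp only [le_sub_comm (b := t)]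
  rw [degm, hset, csSup_Iic, Int.toNat_of_nonneg (by omega)]

end MinFreeRes

/-- For a nonzero homogeneous `a ∈ F_i` of degree `t` one has
`‖a‖ = |a|_F + |a|_m`, where `‖a‖ = t - i`. -/
theorem norm_eq_degF_add_degm {k : Type} [Field k] {n : ℕ}
    (J : Ideal (PolyS k n)) (hJ : IdealIsHomog J)
    {M : Type} [AddCommGroup M] [Module (PolyS k n ⧸ J) M]
    (gM : GrModStr (quotHom k n J) M)
    (res : MinFreeRes (mIdlQ k n J) (quotHom k n J) M gM)
    (i : ℕ) (t : ℤ) (a : res.β i →₀ (PolyS k n ⧸ J))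
    (ha : a ≠ 0) (hta : res.IsHomogF i t a) :
    t - (i : ℤ) = res.degF a + (res.degm a : ℤ) := by
  have hadic := adicFiltrationEqDegree_quotHom hJ
  rw [res.degF_eq hadic (quotHom_one J) (quotHom_zero J) ha, res.degm_eq hadic hta ha]
  ring

end LinMaps
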